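/- Let q ≥ 2 and n ≥ 1 be integers and f : ℤ_q^n → ℤ_{2q}. Then for every z ∈ ℤ_q^n, the 2q-nega-autocorrelation satisfies C_f(z) = ω^{Σ_i ẑ_i} Σ_{u ∈ ℤ_q^n} |N_f(u)|² ξ^{⟨û,ẑ⟩}. -/

import Mathlib

open Finset

/-- `ω = e^{πi/q}`, a primitive `2q`-th root of unity. -/
noncomputable def omg (q : ℕ) : ℂ := Complex.exp ((Real.pi : ℂ) * Complex.I / q)

/-- `ξ = e^{2πi/q}`, a primitive `q`-th root of unity. -/
noncomputable def xiq (q : ℕ) : ℂ := Complex.exp (2 * (Real.pi : ℂ) * Complex.I / q)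

/-- The `2q`-nega-Hadamard transform of `f : ℤ_q^n → ℤ_{2q}` at `u ∈ ℤ_q^n`:
`N_f(u) = q^{-n/2} Σ_x ω^{f(x)} ξ^{⟨x̂,û⟩} ω^{Σ_i x̂_i}`. -/
noncomputable def NHT (q n : ℕ) [NeZero q] (f : (Fin n → ZMod q) → ZMod (2 * q))
    (u : Fin n → ZMod q) : ℂ :=
  (Real.sqrt ((q : ℝ) ^ n) : ℂ)⁻¹ *
    ∑ x : Fin n → ZMod q,
      omg q ^ (f x).val * xiq q ^ (∑ i, (x i).val * (u i).val) * omg q ^ (∑ i, (x i).val)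

/-- The `2q`-nega-crosscorrelation of `f, g : ℤ_q^m → ℤ_{2q}` at `u`:
`C_{f,g}(u) = Σ_x ω^{f(x) − g(x+u)} (−1)^{n_q(x̂,û)}`. -/
noncomputable def negaCC (q m : ℕ) [NeZero q]
    (f g : (Fin m → ZMod q) → ZMod (2 * q)) (u : Fin m → ZMod q) : ℂ :=
  ∑ x : Fin m → ZMod q,
    omg q ^ (f x - g (x + u)).val *
      (-1 : ℂ) ^ (Finset.univ.filter (fun i => q ≤ (x i).val + (u i).val)).card

/-! With `F x = ω^{f(x) + Σ x̂_i}`, `√(qⁿ) N_f` is the Fourier transform of `F` for the characters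
`x ↦ ξ^{⟨x̂,û⟩}` of `ℤ_qⁿ`, and orthogonality of these characters (Wiener–Khinchin) gives
`Σ_u |N_f(u)|² ξ^{⟨û,ẑ⟩} = Σ_x F(x) conj F(x+z)`. Since `x̂_i + ẑ_i = (x+z)^_i + q [x̂_i + ẑ_i ≥ q]`
and `ω^q = -1`, multiplying the `x`-th term by `ω^{Σ ẑ_i}` turns it into
`ω^{f(x) - f(x+z)} (-1)^{n_q(x̂,ẑ)}`. -/

open ComplexConjugate

namespace AddChar

lemma map_sum_eq_prod {A M ι : Type*} [AddCommMonoid A] [CommMonoid M] (ψ : AddChar A M)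
    (s : Finset ι) (g : ι → A) : ψ (∑ i ∈ s, g i) = ∏ i ∈ s, ψ (g i) := by
  induction s using Finset.cons_induction with
  | empty => simp
  | cons a s ha ih => rw [sum_cons, prod_cons, map_add_eq_mul, ih]

variable {R ι : Type*} [CommRing R] [Fintype R] [Fintype ι] [DecidableEq ι]

lemma sum_apply_dotProduct [DecidableEq R] {ψ : AddChar R ℂ} (hψ : ψ.IsPrimitive) (v : ι → R) :
    ∑ u : ι → R, ψ (u ⬝ᵥ v) = if v = 0 then (Fintype.card R : ℂ) ^ Fintype.card ι else 0 := by
  simp only [dotProduct, map_sum_eq_prod]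
  rw [← Fintype.prod_sum (fun i (t : R) ↦ ψ (t * v i))]
  simp only [sum_mulShift _ hψ, Nat.cast_ite, Nat.cast_zero, Fintype.prod_ite_zero, prod_const,
    card_univ, funext_iff, Pi.zero_apply]

theorem wiener_khinchin {ψ : AddChar R ℂ} (hψ : ψ.IsPrimitive) (F : (ι → R) → ℂ) (z : ι → R) :
    ∑ u : ι → R, ((‖∑ x, F x * ψ (x ⬝ᵥ u)‖ ^ 2 : ℝ) : ℂ) * ψ (u ⬝ᵥ z)
      = (Fintype.card R : ℂ) ^ Fintype.card ι * ∑ x, F x * conj (F (x + z)) := by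
  classical
  have hterm (u x y : ι → R) : F x * ψ (x ⬝ᵥ u) * conj (F y * ψ (y ⬝ᵥ u)) * ψ (u ⬝ᵥ z)
      = F x * conj (F y) * ψ (u ⬝ᵥ (x - y + z)) := by
    rw [map_mul, ← map_neg_eq_conj, dotProduct_add, dotProduct_sub, dotProduct_comm u x,
      dotProduct_comm u y, sub_eq_add_neg, map_add_eq_mul, map_add_eq_mul]
    ring
  simp_rw [Complex.ofReal_pow, ← Complex.mul_conj', map_sum, sum_mul_sum, sum_mul, hterm]
  rw [sum_comm, mul_sum]
  refine sum_congr rfl fun x _ ↦ ?_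
  rw [sum_comm]
  simp_rw [← mul_sum, sum_apply_dotProduct hψ, sub_add_eq_add_sub, sub_eq_zero, mul_ite, mul_zero,
    sum_ite_eq, mem_univ, if_true]
  ring

end AddChar

open ZMod (stdAddChar)

lemma ZMod.val_add_val_eq {q : ℕ} [NeZero q] (a b : ZMod q) :
    a.val + b.val = (a + b).val + if q ≤ a.val + b.val then q else 0 := by
  split_ifs with h
  · exact val_add_val_of_le h
  · rw [val_add_of_lt (not_le.mp h), add_zero]

lemma ZMod.sum_val_add_sum_val {ι : Type*} [Fintype ι] {q : ℕ} [NeZero q] (x z : ι → ZMod q) :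
    ∑ i, (x i).val + ∑ i, (z i).val
      = ∑ i, ((x + z) i).val + q * #{i | q ≤ (x i).val + (z i).val} := by
  rw [← sum_add_distrib, sum_congr rfl fun i _ ↦ val_add_val_eq (x i) (z i), sum_add_distrib,
    sum_ite, sum_const_zero, add_zero, sum_const, smul_eq_mul, mul_comm]
  rfl

section RootsOfUnity

variable (q : ℕ) [NeZero q]

lemma omg_pow_eq_stdAddChar (m : ℕ) : omg q ^ m = stdAddChar (m : ZMod (2 * q)) := by
  rw [ZMod.stdAddChar_apply, ZMod.toCircle_natCast, omg, ← Complex.exp_nat_mul]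
  push_cast
  congr 1
  field_simp

lemma xiq_pow_eq_stdAddChar (m : ℕ) : xiq q ^ m = stdAddChar (m : ZMod q) := by
  rw [ZMod.stdAddChar_apply, ZMod.toCircle_natCast, xiq, ← Complex.exp_nat_mul]
  congr 1
  ring

lemma omg_pow_self : omg q ^ q = -1 := by
  rw [omg, ← Complex.exp_nat_mul, mul_div_cancel₀ _ (NeZero.ne (q : ℂ)), Complex.exp_pi_mul_I]

lemma xiq_pow_sum_val_mul_val {ι : Type*} [Fintype ι] (x u : ι → ZMod q) :
    xiq q ^ (∑ i, (x i).val * (u i).val) = stdAddChar (x ⬝ᵥ u) := by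
  rw [xiq_pow_eq_stdAddChar]
  push_cast
  simp only [ZMod.natCast_val, ZMod.cast_id', id, dotProduct]

lemma omg_pow_val_sub_mul_neg_one_pow {ι : Type*} [Fintype ι] (a b : ZMod (2 * q))
    (x z : ι → ZMod q) :
    omg q ^ (a - b).val * (-1 : ℂ) ^ #{i | q ≤ (x i).val + (z i).val}
      = omg q ^ (∑ i, (z i).val) * ((omg q ^ a.val * omg q ^ (∑ i, (x i).val))
          * conj (omg q ^ b.val * omg q ^ (∑ i, ((x + z) i).val))) := by
  rw [← omg_pow_self q, ← pow_mul]
  simp only [omg_pow_eq_stdAddChar, ZMod.natCast_val, ZMod.cast_id', id,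
    ← AddChar.map_neg_eq_conj, ← AddChar.map_add_eq_mul]
  congr 1
  have h := congrArg (Nat.cast : ℕ → ZMod (2 * q)) (ZMod.sum_val_add_sum_val x z)
  push_cast at h ⊢
  linear_combination -h

lemma sq_norm_NHT (n : ℕ) (f : (Fin n → ZMod q) → ZMod (2 * q)) (u : Fin n → ZMod q) :
    ((‖NHT q n f u‖ ^ 2 : ℝ) : ℂ) = ((q : ℂ) ^ n)⁻¹ * ((‖∑ x, omg q ^ (f x).val *
      omg q ^ (∑ i, (x i).val) * stdAddChar (x ⬝ᵥ u)‖ ^ 2 : ℝ) : ℂ) := by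
  simp_rw [NHT, xiq_pow_sum_val_mul_val]
  rw [sum_congr rfl fun x _ ↦ mul_right_comm _ _ _, norm_mul, mul_pow, norm_inv, Complex.norm_real,
    Real.norm_eq_abs, inv_pow, sq_abs, Real.sq_sqrt (by positivity)]
  push_cast
  rfl

end RootsOfUnity

theorem negaAC_eq_sum_general (q n : ℕ) [NeZero q]
    (f : (Fin n → ZMod q) → ZMod (2 * q)) (z : Fin n → ZMod q) :
    negaCC q n f f z
      = omg q ^ (∑ i, (z i).val) *
          ∑ u : Fin n → ZMod q,
            (‖NHT q n f u‖ ^ 2 : ℝ) * xiq q ^ (∑ i, (u i).val * (z i).val) := by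
  simp only [xiq_pow_sum_val_mul_val, sq_norm_NHT, mul_assoc ((q : ℂ) ^ n)⁻¹, ← mul_sum,
    AddChar.wiener_khinchin (ZMod.isPrimitive_stdAddChar q), ZMod.card, Fintype.card_fin]
  rw [inv_mul_cancel_left₀ (pow_ne_zero n (NeZero.ne (q : ℂ))), mul_sum, negaCC]
  exact sum_congr rfl fun x _ ↦ omg_pow_val_sub_mul_neg_one_pow q _ _ x z

/-- The `2q`-nega-autocorrelation satisfies
`C_f(z) = ω^{Σ_i ẑ_i} Σ_u |N_f(u)|² ξ^{⟨û,ẑ⟩}` for all `z ∈ ℤ_q^n`. -/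
theorem negaAC_eq_sum (q n : ℕ) [NeZero q] (hq : 2 ≤ q) (hn : 1 ≤ n)
    (f : (Fin n → ZMod q) → ZMod (2 * q)) (z : Fin n → ZMod q) :
    negaCC q n f f z
      = omg q ^ (∑ i, (z i).val) *
          ∑ u : Fin n → ZMod q,
            (‖NHT q n f u‖ ^ 2 : ℝ) * xiq q ^ (∑ i, (u i).val * (z i).val) :=
  negaAC_eq_sum_general q n f z
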